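/- arXiv:1602.03435 — 4 statements merged into one kernel-verified Lean document; each statement's English description precedes it below -/
import Mathlib

section
/- Let X ⊆ ℕ be a finite set with 0 ∈ X. Then the star graph K_{1, 2^{|X|}−2} admits a TIASSL with respect to X: labeling the center by {0} and the leaves bijectively by the remaining nonempty subsets of X gives f(V) = P(X)\{∅}, f⁺(E) = P(X)\{∅,{0}}, and f(V) ∪ f⁺(E) = P(X)\{∅}. -/
/-!
Since `{0} + A = A`, labeling the center by `{0}` makes every edge sumset equal to the label of
its leaf, so `f⁺(E) = P(X) \ {∅, {0}} ⊆ f(V) = P(X) \ {∅}`; and `f(V) ∪ {∅} = P(X)` is the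
discrete topology on `X`.
-/

open Pointwise

/-- A collection `T` of subsets of a finite set `X ⊆ ℕ` is a topology on `X`. -/
def IsTopologyOn (T : Set (Finset ℕ)) (X : Finset ℕ) : Prop :=
  ∅ ∈ T ∧ X ∈ T ∧ (∀ A ∈ T, A ⊆ X) ∧
    (∀ A ∈ T, ∀ B ∈ T, A ∪ B ∈ T) ∧ (∀ A ∈ T, ∀ B ∈ T, A ∩ B ∈ T)

theorem isTopologyOn_powerset (X : Finset ℕ) : IsTopologyOn ↑X.powerset X := by
  simp only [IsTopologyOn, Finset.coe_powerset, Set.mem_preimage, Set.mem_powerset_iff,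
    Finset.coe_subset]
  exact ⟨Finset.empty_subset X, subset_rfl, fun _ h => h, fun _ hA _ hB => Finset.union_subset hA hB,
    fun _ hA _ _ => Finset.inter_subset_left.trans hA⟩

theorem setOf_subset_nonempty_union_empty {α : Type*} (X : Finset α) :
    {A : Finset α | A ⊆ X ∧ A.Nonempty} ∪ {∅} = ↑X.powerset := by
  ext A
  rcases A.eq_empty_or_nonempty with rfl | hA
  · simp
  · simp [hA, hA.ne_empty]

theorem Finset.card_powerset_sdiff_empty_singleton {α : Type*} [DecidableEq α] {X : Finset α}
    {a : α} (ha : a ∈ X) : (X.powerset \ {∅, {a}}).card = 2 ^ X.card - 2 := by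
  have hsub : ({∅, {a}} : Finset (Finset α)) ⊆ X.powerset := by
    simp [Finset.insert_subset_iff, ha]
  rw [Finset.card_sdiff_of_subset hsub, Finset.card_powerset,
    Finset.card_pair (Finset.singleton_nonempty a).ne_empty.symm]

section Star

variable {β : Type*}

theorem completeBipartiteGraph_fin_one_adj_iff (u v : Fin 1 ⊕ β) :
    (completeBipartiteGraph (Fin 1) β).Adj u v ↔
      (∃ j, u = .inl 0 ∧ v = .inr j) ∨ (∃ j, u = .inr j ∧ v = .inl 0) := by
  rcases u with i | i <;> rcases v with j | j <;> simp [Fin.fin_one_eq_zero]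

theorem star_edge_sumsets_eq_range (f : Fin 1 ⊕ β → Finset ℕ) (hf : f (.inl 0) = {0}) :
    {A : Finset ℕ | ∃ u v, (completeBipartiteGraph (Fin 1) β).Adj u v ∧ A = f u + f v} =
      Set.range (f ∘ Sum.inr) := by
  classical
  have hzero : ∀ B : Finset ℕ, ({0} : Finset ℕ) + B = B := fun B => by simp [Finset.singleton_add]
  ext A
  simp only [completeBipartiteGraph_fin_one_adj_iff, Set.mem_ofPred_eq, Set.mem_range,
    Function.comp_apply]
  constructor
  · rintro ⟨u, v, ⟨j, rfl, rfl⟩ | ⟨j, rfl, rfl⟩, rfl⟩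
    · exact ⟨j, by rw [hf, hzero]⟩
    · exact ⟨j, by rw [hf, add_comm, hzero]⟩
  · rintro ⟨j, rfl⟩
    exact ⟨.inl 0, .inr j, .inl ⟨j, rfl, rfl⟩, by rw [hf, hzero]⟩

end Star

theorem star_admits_tiassl_general (X : Finset ℕ) (h0 : (0 : ℕ) ∈ X) :
    ∃ f : (Fin 1 ⊕ Fin (2 ^ X.card - 2)) → Finset ℕ,
      Function.Injective f ∧
      f (Sum.inl 0) = {0} ∧
      Set.range f = {A : Finset ℕ | A ⊆ X ∧ A.Nonempty} ∧
      (∀ u v, (completeBipartiteGraph (Fin 1) (Fin (2 ^ X.card - 2))).Adj u v →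
        f u + f v ⊆ X) ∧
      IsTopologyOn (Set.range f ∪ {∅}) X ∧
      {A : Finset ℕ | ∃ u v,
          (completeBipartiteGraph (Fin 1) (Fin (2 ^ X.card - 2))).Adj u v ∧ A = f u + f v}
        = {A : Finset ℕ | A ⊆ X ∧ A.Nonempty ∧ A ≠ {0}} ∧
      Set.range f ∪ {A : Finset ℕ | ∃ u v,
          (completeBipartiteGraph (Fin 1) (Fin (2 ^ X.card - 2))).Adj u v ∧ A = f u + f v}
        = {A : Finset ℕ | A ⊆ X ∧ A.Nonempty} := by
  classical
  set S := X.powerset \ {∅, {0}}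
  let e : Fin (2 ^ X.card - 2) ≃ S :=
    (finCongr (Finset.card_powerset_sdiff_empty_singleton h0).symm).trans S.equivFin.symm
  let f : Fin 1 ⊕ Fin (2 ^ X.card - 2) → Finset ℕ := Sum.elim (fun _ => {0}) (fun i => e i)
  have hleaves : Set.range (f ∘ Sum.inr) = {A | A ⊆ X ∧ A.Nonempty ∧ A ≠ {0}} := by
    rw [show f ∘ Sum.inr = Subtype.val ∘ e from rfl, e.surjective.range_comp, Subtype.range_coe]
    ext A
    simp [S, Finset.nonempty_iff_ne_empty]
  have hrange : Set.range f = {A | A ⊆ X ∧ A.Nonempty} := by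
    rw [show f = Sum.elim (fun _ => {0}) (f ∘ Sum.inr) from rfl, Set.Sum.elim_range, hleaves,
      Set.range_const]
    ext A
    by_cases hA : A = {0} <;> simp [hA, h0]
  have hedges := star_edge_sumsets_eq_range f rfl
  have hedges_sub : Set.range (f ∘ Sum.inr) ⊆ Set.range f := Set.range_comp_subset_range _ _
  refine ⟨f, ?_, rfl, hrange, fun u v huv => ?_, ?_, hedges.trans hleaves, ?_⟩
  · refine Function.Injective.sumElim (fun _ _ _ => Subsingleton.elim _ _)
      (Subtype.val_injective.comp e.injective) fun _ i h => ?_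
    exact (Finset.mem_sdiff.1 (e i).2).2 (by simp [← h])
  · have hmem : f u + f v ∈ Set.range f := hedges_sub (hedges ▸ ⟨u, v, huv, rfl⟩)
    exact (hrange ▸ hmem).1
  · rw [hrange, setOf_subset_nonempty_union_empty]
    exact isTopologyOn_powerset X
  · rw [hedges, Set.union_eq_left.2 hedges_sub, hrange]

/-- The star `K_{1, 2^{|X|}-2}` admits a TIASSL with respect to `X`: the center is
labeled `{0}` and the leaves get the remaining nonempty subsets of `X` bijectively. -/
theorem star_admits_tiassl (X : Finset ℕ) (h0 : (0 : ℕ) ∈ X) (hcard : 2 ≤ X.card) :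
    ∃ f : (Fin 1 ⊕ Fin (2 ^ X.card - 2)) → Finset ℕ,
      Function.Injective f ∧
      f (Sum.inl 0) = {0} ∧
      Set.range f = {A : Finset ℕ | A ⊆ X ∧ A.Nonempty} ∧
      (∀ u v, (completeBipartiteGraph (Fin 1) (Fin (2 ^ X.card - 2))).Adj u v →
        f u + f v ⊆ X) ∧
      IsTopologyOn (Set.range f ∪ {∅}) X ∧
      {A : Finset ℕ | ∃ u v,
          (completeBipartiteGraph (Fin 1) (Fin (2 ^ X.card - 2))).Adj u v ∧ A = f u + f v}
        = {A : Finset ℕ | A ⊆ X ∧ A.Nonempty ∧ A ≠ {0}} ∧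
      Set.range f ∪ {A : Finset ℕ | ∃ u v,
          (completeBipartiteGraph (Fin 1) (Fin (2 ^ X.card - 2))).Adj u v ∧ A = f u + f v}
        = {A : Finset ℕ | A ⊆ X ∧ A.Nonempty} :=
  star_admits_tiassl_general X h0
end

section
/- Let X ⊆ ℕ be finite with 0 ∈ X, and let G be a graph admitting a TIASSL f with respect to X. Let 𝒜 be the family of nonempty subsets of X that are not expressible as a sumset A + B with A, B ⊆ X both different from {0}. Then every element of 𝒜 is the set-label of some vertex of G; consequently |V(G)| ≥ |𝒜| if X ∈ 𝒜, and |V(G)| ≥ |𝒜| + 1 if X ∉ 𝒜. -/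
open Pointwise

/-- The set-labels induced on edges: sumsets of the labels of adjacent vertices. -/
def edgeLabels {V : Type*} (G : SimpleGraph V) (f : V → Finset ℕ) : Set (Finset ℕ) :=
  {A : Finset ℕ | ∃ u v, G.Adj u v ∧ A = f u + f v}

/-- `f` is a topological integer additive set-sequential labeling (TIASSL) of `G`
with respect to the ground set `X`. -/
def IsTIASSL {V : Type*} (G : SimpleGraph V) (f : V → Finset ℕ) (X : Finset ℕ) : Prop :=
  Function.Injective f ∧ (∀ v, (f v).Nonempty) ∧ (∀ v, f v ⊆ X) ∧
    (∀ u v, G.Adj u v → f u + f v ⊆ X) ∧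
    IsTopologyOn (Set.range f ∪ {∅}) X ∧
    Set.range f ∪ edgeLabels G f = {A : Finset ℕ | A ⊆ X ∧ A.Nonempty}

/-- The nonempty subsets of `X` that are not non-trivial sumsets of two subsets of `X`. -/
def notSumsets (X : Finset ℕ) : Set (Finset ℕ) :=
  {A : Finset ℕ | A ⊆ X ∧ A.Nonempty ∧
    ¬ ∃ B C : Finset ℕ, B ⊆ X ∧ C ⊆ X ∧ B ≠ {0} ∧ C ≠ {0} ∧ A = B + C}

/-- The nonempty subsets of `X` that are not non-trivial summands of any subset of `X`. -/
def notSummands (X : Finset ℕ) : Set (Finset ℕ) :=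
  {B : Finset ℕ | B ⊆ X ∧ B.Nonempty ∧
    ¬ ∃ C D : Finset ℕ, C ⊆ X ∧ D ⊆ X ∧ D.Nonempty ∧ D ≠ {0} ∧ C = B + D}

/-! A set of `notSumsets X` labelling an edge `uv` is `f u + f v` with one summand `{0}`, hence
equals the label of the other end. So all of `notSumsets X` lies among the vertex labels, and so
does `X`, which is open and nonempty; the bounds follow by counting the vertex labels. -/

theorem Set.ncard_le_card_of_subset_range {α β : Type*} [Fintype α] {f : α → β} {S : Set β}
    (h : S ⊆ Set.range f) : S.ncard ≤ Fintype.card α :=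
  calc S.ncard ≤ (Set.range f).ncard := Set.ncard_le_ncard h (Set.finite_range f)
    _ ≤ Nat.card α := Finite.card_range_le f
    _ = Fintype.card α := Nat.card_eq_fintype_card

theorem eq_or_eq_of_mem_notSumsets {X A B C : Finset ℕ} (hA : A ∈ notSumsets X)
    (hB : B ⊆ X) (hC : C ⊆ X) (hABC : A = B + C) : A = B ∨ A = C := by
  by_cases hB0 : B = {0}
  · right; rw [hABC, hB0, Finset.singleton_zero, zero_add]
  by_cases hC0 : C = {0}
  · left; rw [hABC, hC0, Finset.singleton_zero, add_zero]
  exact absurd ⟨B, C, hB, hC, hB0, hC0, hABC⟩ hA.2.2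

namespace IsTIASSL

variable {V : Type*} {G : SimpleGraph V} {f : V → Finset ℕ} {X : Finset ℕ}

theorem notSumsets_subset_range (hf : IsTIASSL G f X) : notSumsets X ⊆ Set.range f := by
  obtain ⟨-, -, hsub, -, -, hcover⟩ := hf
  intro A hA
  have hA' : A ∈ Set.range f ∪ edgeLabels G f := by rw [hcover]; exact ⟨hA.1, hA.2.1⟩
  rcases hA' with hrange | ⟨u, v, -, rfl⟩
  · exact hrange
  · rcases eq_or_eq_of_mem_notSumsets hA (hsub u) (hsub v) rfl with h | h
    · exact ⟨u, h.symm⟩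
    · exact ⟨v, h.symm⟩

theorem mem_range (hf : IsTIASSL G f X) (hX : X.Nonempty) : X ∈ Set.range f := by
  obtain ⟨-, -, -, -, ⟨-, hXopen, -⟩, -⟩ := hf
  exact hXopen.resolve_right hX.ne_empty

end IsTIASSL

theorem tiassl_vertex_count {V : Type*} [Fintype V]
    (G : SimpleGraph V) (X : Finset ℕ) (h0 : (0 : ℕ) ∈ X)
    (f : V → Finset ℕ) (hf : IsTIASSL G f X) :
    (∀ A ∈ notSumsets X, ∃ v, f v = A) ∧
    (X ∈ notSumsets X → (notSumsets X).ncard ≤ Fintype.card V) ∧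
    (X ∉ notSumsets X → (notSumsets X).ncard + 1 ≤ Fintype.card V) := by
  have hsub := hf.notSumsets_subset_range
  refine ⟨fun A hA => hsub hA, fun _ => Set.ncard_le_card_of_subset_range hsub, fun hX => ?_⟩
  have hins : insert X (notSumsets X) ⊆ Set.range f :=
    Set.insert_subset (hf.mem_range ⟨0, h0⟩) hsub
  have hfin : (notSumsets X).Finite := (Set.finite_range f).subset hsub
  simpa [Set.ncard_insert_of_notMem hX hfin] using Set.ncard_le_card_of_subset_range hins
end

section
/- Let X ⊆ ℕ be finite with 0 ∈ X and let G admit a TIASSL f with respect to X. Let ℬ be the family of nonempty subsets B of X such that B is not a non-trivial summand of any subset of X (i.e., there is no C ⊆ X and nonempty D ⊆ X with D ≠ {0} and C = B + D). Then every vertex of G whose set-label lies in ℬ has all its neighbors labeled {0}; in particular the vertex labeled {0} has degree at least the number of elements of ℬ that occur as labels of non-isolated vertices. -/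
open Pointwise

/-!
An edge `vu` makes `f v + f u ⊆ X` a sumset with summand `f v`, so `f v ∈ notSummands X` forces
`f u = {0}`. By injectivity `u` is then the unique vertex labelled `{0}`, so the non-isolated
vertices with labels in `notSummands X` all lie in its neighbourhood.
-/

theorem eq_zero_of_mem_notSummands {X B D : Finset ℕ} (hB : B ∈ notSummands X)
    (hD : D ⊆ X) (hDne : D.Nonempty) (hBD : B + D ⊆ X) : D = {0} := by
  by_contra hD0
  exact hB.2.2 ⟨B + D, D, hBD, hD, hDne, hD0, rfl⟩

theorem SimpleGraph.ncard_image_neighborSet_le_degree {V α : Type*} (G : SimpleGraph V)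
    (v : V) [Fintype (G.neighborSet v)] (f : V → α) :
    (f '' G.neighborSet v).ncard ≤ G.degree v := by
  rw [← G.card_neighborSet_eq_degree, ← Nat.card_eq_fintype_card, Nat.card_coe_set_eq]
  exact Set.ncard_image_le (G.neighborSet v).toFinite

namespace IsTIASSL

variable {V : Type*} {G : SimpleGraph V} {f : V → Finset ℕ} {X : Finset ℕ}

theorem adj_eq_zero_of_mem_notSummands (hf : IsTIASSL G f X) {v u : V}
    (hv : f v ∈ notSummands X) (hvu : G.Adj v u) : f u = {0} :=
  eq_zero_of_mem_notSummands hv (hf.2.2.1 u) (hf.2.1 u) (hf.2.2.2.1 v u hvu)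

theorem adj_of_mem_notSummands (hf : IsTIASSL G f X) {v u v₀ : V}
    (hv : f v ∈ notSummands X) (hvu : G.Adj v u) (hv₀ : f v₀ = {0}) : G.Adj v₀ v := by
  have hu : u = v₀ := hf.1 ((hf.adj_eq_zero_of_mem_notSummands hv hvu).trans hv₀.symm)
  exact (hu ▸ hvu).symm

theorem notSummands_nonisolated_subset_image_neighborSet (hf : IsTIASSL G f X) {v₀ : V}
    (hv₀ : f v₀ = {0}) :
    {B ∈ notSummands X | ∃ v, f v = B ∧ ∃ u, G.Adj v u} ⊆ f '' G.neighborSet v₀ := by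
  rintro B ⟨hB, v, rfl, u, hvu⟩
  exact ⟨v, hf.adj_of_mem_notSummands hB hvu hv₀, rfl⟩

end IsTIASSL

theorem tiassl_notSummand_neighbors_zero_general {V : Type*} [Fintype V]
    (G : SimpleGraph V) [DecidableRel G.Adj]
    (X : Finset ℕ)
    (f : V → Finset ℕ) (hf : IsTIASSL G f X) :
    (∀ v, f v ∈ notSummands X → ∀ u, G.Adj v u → f u = {0}) ∧
    (∀ v₀, f v₀ = {0} →
      {B ∈ notSummands X | ∃ v, f v = B ∧ ∃ u, G.Adj v u}.ncard ≤ G.degree v₀) := by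
  refine ⟨fun v hv u hvu => hf.adj_eq_zero_of_mem_notSummands hv hvu, fun v₀ hv₀ => ?_⟩
  calc {B ∈ notSummands X | ∃ v, f v = B ∧ ∃ u, G.Adj v u}.ncard
      ≤ (f '' G.neighborSet v₀).ncard :=
        Set.ncard_le_ncard (hf.notSummands_nonisolated_subset_image_neighborSet hv₀)
          ((G.neighborSet v₀).toFinite.image f)
    _ ≤ G.degree v₀ := G.ncard_image_neighborSet_le_degree v₀ f

theorem tiassl_notSummand_neighbors_zero {V : Type*} [Fintype V] [DecidableEq V]
    (G : SimpleGraph V) [DecidableRel G.Adj]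
    (X : Finset ℕ) (h0 : (0 : ℕ) ∈ X)
    (f : V → Finset ℕ) (hf : IsTIASSL G f X) :
    (∀ v, f v ∈ notSummands X → ∀ u, G.Adj v u → f u = {0}) ∧
    (∀ v₀, f v₀ = {0} →
      {B ∈ notSummands X | ∃ v, f v = B ∧ ∃ u, G.Adj v u}.ncard ≤ G.degree v₀) :=
  tiassl_notSummand_neighbors_zero_general G X f hf
end

section
/- No connected graph on at least 2 vertices admits a topological integer additive set-sequential indexer (TIASSI); i.e., if f is a TIASSL of a connected graph G with |V(G)| ≥ 2, then the combined labeling f* on V(G) ∪ E(G) (f on vertices, f⁺ on edges) is not injective. -/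
open Pointwise

/-- The induced labeling on unordered pairs of adjacent vertices. -/
def edgeLabel {V : Type*} (f : V → Finset ℕ) : Sym2 V → Finset ℕ :=
  Sym2.lift ⟨fun u v => f u + f v, fun u v => add_comm (f u) (f v)⟩

/-! The label `X` must occur on some vertex `v`; a neighbour `u` of `v` then satisfies
`f u + X ⊆ X`, which forces `f u = {0}` (compare maxima), so the edge `uv` is labelled
`{0} + X = X = f v`. -/

theorem Finset.eq_singleton_zero_of_add_subset_self {α : Type*} [AddCommMonoid α] [LinearOrder α]
    [CanonicallyOrderedAdd α] [IsOrderedCancelAddMonoid α] {A X : Finset α}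
    (hA : A.Nonempty) (hX : X.Nonempty) (h : A + X ⊆ X) : A = {0} := by
  have hzero : ∀ a ∈ A, a = 0 := fun a ha =>
    nonpos_iff_eq_zero.1 <| add_le_iff_nonpos_left.1 <|
      X.le_max' _ (h (Finset.add_mem_add ha (X.max'_mem hX)))
  obtain ⟨a, ha⟩ := hA
  exact Finset.eq_singleton_iff_unique_mem.2 ⟨hzero a ha ▸ ha, hzero⟩

namespace IsTIASSL

variable {V : Type*} {G : SimpleGraph V} {f : V → Finset ℕ} {X : Finset ℕ}

theorem exists_eq_ground [Nonempty V] (hf : IsTIASSL G f X) : ∃ v, f v = X := by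
  obtain ⟨-, hne, hsub, -, ⟨-, hX, -⟩, -⟩ := hf
  rcases hX with hX | hX
  · exact hX
  · obtain ⟨v⟩ := ‹Nonempty V›
    exact absurd hX ((hne v).mono (hsub v)).ne_empty

theorem eq_singleton_zero_of_adj_of_eq_ground (hf : IsTIASSL G f X) {u v : V}
    (huv : G.Adj u v) (hv : f v = X) : f u = {0} :=
  Finset.eq_singleton_zero_of_add_subset_self (hf.2.1 u) (hv ▸ hf.2.1 v)
    (hv ▸ hf.2.2.2.1 u v huv)

end IsTIASSL

theorem no_connected_tiassi_general {V : Type*} [Fintype V]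
    (G : SimpleGraph V) (hconn : G.Connected) (hcard : 2 ≤ Fintype.card V)
    (X : Finset ℕ)
    (f : V → Finset ℕ) (hf : IsTIASSL G f X) :
    ¬ Function.Injective
        (Sum.elim f (fun e : G.edgeSet => edgeLabel f e.1) :
          V ⊕ G.edgeSet → Finset ℕ) := by
  have : Nontrivial V := Fintype.one_lt_card_iff_nontrivial.1 hcard
  obtain ⟨v, hv⟩ := hf.exists_eq_ground
  obtain ⟨u, hvu⟩ := hconn.preconnected.exists_adj_of_nontrivial v
  have hu : f u = {0} := hf.eq_singleton_zero_of_adj_of_eq_ground hvu.symm hv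
  have hedge : edgeLabel f s(v, u) = f v := by simp [edgeLabel, hu, Finset.singleton_zero]
  intro hinj
  exact Sum.inl_ne_inr (@hinj (.inl v) (.inr ⟨s(v, u), hvu⟩) hedge.symm)

/-- No connected graph on at least two vertices admits a TIASSI: the combined
labeling (`f` on vertices, `f⁺` on edges) is never injective. -/
theorem no_connected_tiassi {V : Type*} [Fintype V]
    (G : SimpleGraph V) (hconn : G.Connected) (hcard : 2 ≤ Fintype.card V)
    (X : Finset ℕ) (h0 : (0 : ℕ) ∈ X)
    (f : V → Finset ℕ) (hf : IsTIASSL G f X) :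
    ¬ Function.Injective
        (Sum.elim f (fun e : G.edgeSet => edgeLabel f e.1) :
          V ⊕ G.edgeSet → Finset ℕ) :=
  no_connected_tiassi_general G hconn hcard X f hf
end
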